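/- Let (X,G) be a transitive Cantor dynamical system (some G-orbit is dense) with all orbits infinite. Then for every nonempty clopen set A there exists a point x ∈ A and g ∈ G with g(x) ∈ A and g(x) ≠ x; consequently the full group [G] has many involutions. -/

import Mathlib

open Set

variable {X : Type*} [TopologicalSpace X]

noncomputable instance Homeomorph.instGroupStmt : Group (X ≃ₜ X) where
  mul f g := g.trans f
  one := Homeomorph.refl X
  inv := Homeomorph.symm
  mul_assoc _ _ _ := Homeomorph.ext fun _ => rfl
  one_mul _ := Homeomorph.ext fun _ => rfl
  mul_one _ := Homeomorph.ext fun _ => rfl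
  inv_mul_cancel f := Homeomorph.ext fun x => f.symm_apply_apply x

@[simp] theorem Homeomorph.mul_apply' (f g : X ≃ₜ X) (x : X) : (f * g) x = f (g x) := rfl
@[simp] theorem Homeomorph.one_apply' (x : X) : (1 : X ≃ₜ X) x = x := rfl

/-- The support of a homeomorphism. -/
def spr (γ : X ≃ₜ X) : Set X := interior (closure {x | γ x ≠ x})

/-- The orbit of a point under a subgroup of homeomorphisms. -/
def orbitOf (G : Subgroup (X ≃ₜ X)) (x : X) : Set X := {y | ∃ g ∈ G, (g : X ≃ₜ X) x = y}

/-- The full group of a Cantor dynamical system. -/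
def fullGroup (G : Subgroup (X ≃ₜ X)) : Subgroup (X ≃ₜ X) where
  carrier := {γ | ∀ x, γ x ∈ orbitOf G x}
  one_mem' x := ⟨1, G.one_mem, rfl⟩
  mul_mem' {a b} ha hb x := by
    obtain ⟨h, hh, hbx⟩ := hb x
    obtain ⟨g, hg, hax⟩ := ha (b x)
    exact ⟨g * h, G.mul_mem hg hh, by simp only [Homeomorph.mul_apply'] at *; rw [hbx, hax]⟩
  inv_mem' {a} ha := by
    intro x
    obtain ⟨g, hg, hax⟩ := ha (a⁻¹ x)
    refine ⟨g⁻¹, G.inv_mem hg, ?_⟩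
    have : a (a⁻¹ x) = x := a.apply_symm_apply x
    rw [this] at hax
    have : (g⁻¹ : X ≃ₜ X) (g (a⁻¹ x)) = a⁻¹ x := g.symm_apply_apply _
    rw [hax] at this
    exact this

/-!
A dense orbit in a perfect space meets every nonempty open set `A` in two distinct points `y` and
`g y` with `g ∈ G`. Shrinking a clopen neighbourhood `U` of `y` until `U` and `g '' U` are disjoint
and contained in `A`, the homeomorphism acting as `g` on `U`, as `g⁻¹` on `g '' U` and as the
identity elsewhere is a nontrivial involution of the full group supported in `A`.
-/

theorem exists_apply_eq_of_mem_orbitOf {G : Subgroup (X ≃ₜ X)} {x₀ y w : X}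
    (hy : y ∈ orbitOf G x₀) (hw : w ∈ orbitOf G x₀) : ∃ g ∈ G, g y = w := by
  obtain ⟨a, ha, rfl⟩ := hy
  obtain ⟨b, hb, rfl⟩ := hw
  exact ⟨b * a⁻¹, G.mul_mem hb (G.inv_mem ha), by simp [← Homeomorph.mul_apply']⟩

theorem exists_apply_ne_mem_of_dense_orbitOf [T1Space X] [PerfectSpace X]
    {G : Subgroup (X ≃ₜ X)} {x₀ : X} (hx₀ : Dense (orbitOf G x₀)) {A : Set X} (hA : IsOpen A)
    (hne : A.Nonempty) : ∃ x ∈ A, ∃ g ∈ G, g x ∈ A ∧ g x ≠ x := by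
  obtain ⟨y, hy, hyA⟩ := hx₀.exists_mem_open hA hne
  obtain ⟨w, ⟨hw, hwy⟩, hwA⟩ := (hx₀.sdiff_singleton y).exists_mem_open hA hne
  obtain ⟨g, hg, rfl⟩ := exists_apply_eq_of_mem_orbitOf hy hw
  exact ⟨y, hyA, g, hg, hwA, hwy⟩

theorem spr_subset_of_isClosed {π : X ≃ₜ X} {F : Set X} (hF : IsClosed F)
    (hπ : ∀ x ∉ F, π x = x) : spr π ⊆ F :=
  interior_subset.trans <| hF.closure_subset_iff.mpr fun x hx => by_contra fun hxF => hx (hπ x hxF)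

theorem exists_involution_swap_isClopen (g : X ≃ₜ X) {U : Set X} (hU : IsClopen U)
    (hdisj : Disjoint U (g '' U)) :
    ∃ π : X ≃ₜ X, (∀ x ∈ U, π x = g x) ∧ (∀ x ∈ g '' U, π x = g.symm x) ∧
      (∀ x ∉ U ∪ g '' U, π x = x) ∧ π * π = 1 := by
  classical
  have hgU : IsClopen (g '' U) := g.image_eq_preimage_symm U ▸ hU.preimage g.symm.continuous
  set f : X → X := U.piecewise g ((g '' U).piecewise g.symm id)
  have hf₁ : ∀ x ∈ U, f x = g x := fun x hx => piecewise_eq_of_mem _ _ _ hx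
  have hf₂ : ∀ x ∈ g '' U, f x = g.symm x := fun x hx => by
    simp only [f, piecewise_eq_of_notMem _ _ _ (disjoint_right.mp hdisj hx),
      piecewise_eq_of_mem _ _ _ hx]
  have hf₃ : ∀ x ∉ U ∪ g '' U, f x = x := fun x hx => by
    rw [mem_union, not_or] at hx
    simp only [f, piecewise_eq_of_notMem _ _ _ hx.1, piecewise_eq_of_notMem _ _ _ hx.2, id]
  have hff : ∀ x, f (f x) = x := by
    intro x
    by_cases hx : x ∈ U
    · rw [hf₁ x hx, hf₂ _ (mem_image_of_mem g hx), g.symm_apply_apply]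
    by_cases hx' : x ∈ g '' U
    · obtain ⟨u, hu, rfl⟩ := hx'
      rw [hf₂ _ (mem_image_of_mem g hu), g.symm_apply_apply, hf₁ u hu]
    · have hx'' : x ∉ U ∪ g '' U := by simp [hx, hx']
      rw [hf₃ x hx'', hf₃ x hx'']
  have hcont : Continuous f :=
    g.continuous.piecewise (by simp [hU.frontier_eq])
      (g.symm.continuous.piecewise (by simp [hgU.frontier_eq]) continuous_id)
  exact ⟨⟨⟨f, f, hff, hff⟩, hcont, hcont⟩, hf₁, hf₂, hf₃, Homeomorph.ext hff⟩

section Profinite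

variable [T2Space X] [CompactSpace X] [TotallyDisconnectedSpace X]

theorem exists_isClopen_disjoint_image_subset (g : X ≃ₜ X) {x : X} (hgx : g x ≠ x) {A : Set X}
    (hA : IsOpen A) (hxA : x ∈ A) (hgxA : g x ∈ A) :
    ∃ U, IsClopen U ∧ x ∈ U ∧ Disjoint U (g '' U) ∧ U ∪ g '' U ⊆ A := by
  have hnhds : A ∩ g ⁻¹' A ∩ {g x}ᶜ ∈ nhds x :=
    (hA.inter (hA.preimage g.continuous)).inter isOpen_compl_singleton |>.mem_nhds
      ⟨⟨hxA, hgxA⟩, hgx.symm⟩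
  obtain ⟨C, ⟨hxC, hC⟩, hCsub⟩ := (nhds_basis_clopen x).mem_iff.mp hnhds
  -- `g` maps `U` into the complement of `C ⊇ U`.
  refine ⟨C ∩ g ⁻¹' Cᶜ, hC.inter (hC.compl.preimage g.continuous),
    ⟨hxC, fun h => (hCsub h).2 rfl⟩, ?_, ?_⟩
  · rw [disjoint_left]
    rintro y ⟨hyC, -⟩ ⟨u, ⟨-, hu⟩, rfl⟩
    exact hu hyC
  · rintro y (⟨hyC, -⟩ | ⟨u, ⟨huC, -⟩, rfl⟩)
    exacts [(hCsub hyC).1.1, (hCsub huC).1.2]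

theorem exists_involution_mem_fullGroup_spr_subset {G : Subgroup (X ≃ₜ X)} {g : X ≃ₜ X}
    (hg : g ∈ G) {x : X} (hgx : g x ≠ x) {A : Set X} (hA : IsOpen A) (hxA : x ∈ A)
    (hgxA : g x ∈ A) : ∃ π ∈ fullGroup G, π * π = 1 ∧ π ≠ 1 ∧ spr π ⊆ A := by
  obtain ⟨U, hU, hxU, hdisj, hUA⟩ := exists_isClopen_disjoint_image_subset g hgx hA hxA hgxA
  obtain ⟨π, hπ₁, hπ₂, hπ₃, hππ⟩ := exists_involution_swap_isClopen g hU hdisj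
  have hgU : IsClopen (g '' U) := g.image_eq_preimage_symm U ▸ hU.preimage g.symm.continuous
  refine ⟨π, fun y => ?_, hππ, fun h => hgx ?_, ?_⟩
  · by_cases hy : y ∈ U
    · exact ⟨g, hg, (hπ₁ y hy).symm⟩
    by_cases hy' : y ∈ g '' U
    · exact ⟨g⁻¹, G.inv_mem hg, (hπ₂ y hy').symm⟩
    · exact ⟨1, G.one_mem, (hπ₃ y (by simp [hy, hy'])).symm⟩
  · rw [← hπ₁ x hxU, h, Homeomorph.one_apply']
  · exact (spr_subset_of_isClosed (hU.union hgU).isClosed hπ₃).trans hUA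

end Profinite

theorem transitive_many_involutions_general {X : Type*} [TopologicalSpace X] [CompactSpace X] [TopologicalSpace.MetrizableSpace X] [TotallyDisconnectedSpace X] [PerfectSpace X]
    (G : Subgroup (X ≃ₜ X))
    (htrans : ∃ x : X, Dense (orbitOf G x)) :
    (∀ A : Set X, IsClopen A → A.Nonempty →
        ∃ x ∈ A, ∃ g ∈ G, (g : X ≃ₜ X) x ∈ A ∧ (g : X ≃ₜ X) x ≠ x) ∧
    ∀ A : Set X, A = interior (closure A) → A.Nonempty →
      ∃ π ∈ fullGroup G, π * π = 1 ∧ π ≠ 1 ∧ spr π ⊆ A := by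
  obtain ⟨x₀, hx₀⟩ := htrans
  refine ⟨fun A hA => exists_apply_ne_mem_of_dense_orbitOf hx₀ hA.isOpen, fun A hAreg hne => ?_⟩
  have hA : IsOpen A := hAreg ▸ isOpen_interior
  obtain ⟨x, hxA, g, hg, hgxA, hgx⟩ := exists_apply_ne_mem_of_dense_orbitOf hx₀ hA hne
  exact exists_involution_mem_fullGroup_spr_subset hg hgx hA hxA hgxA

/-- A transitive Cantor system with infinite orbits returns to every clopen set; hence its full
group has many involutions. -/
theorem transitive_many_involutions {X : Type*} [TopologicalSpace X] [CompactSpace X] [TopologicalSpace.MetrizableSpace X] [TotallyDisconnectedSpace X] [PerfectSpace X] [Nonempty X]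
    (G : Subgroup (X ≃ₜ X))
    (htrans : ∃ x : X, Dense (orbitOf G x))
    (hinf : ∀ x : X, (orbitOf G x).Infinite) :
    (∀ A : Set X, IsClopen A → A.Nonempty →
        ∃ x ∈ A, ∃ g ∈ G, (g : X ≃ₜ X) x ∈ A ∧ (g : X ≃ₜ X) x ≠ x) ∧
    ∀ A : Set X, A = interior (closure A) → A.Nonempty →
      ∃ π ∈ fullGroup G, π * π = 1 ∧ π ≠ 1 ∧ spr π ⊆ A :=
  transitive_many_involutions_general G htrans
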